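/- Under (A0), (B1), (B2), if 𝔼_x(τ_ϑ) < +∞ for all x ∈ E, then g(x) = 𝔼_x(τ_ϑ) is a potential for (X(t)) with (I − P)g = 𝟙, and g(u) ≥ g(e) + 𝔼_u[ g(H_1) ; 𝒯_ϑ > 1 ] for all u ∈ E. Consequently V = 𝔼_·(𝒯_ϑ) satisfies V(x) = 𝔼_x(τ_ϑ)/𝔼_e(τ_ϑ) for all x ∈ E. -/

import Mathlib

open scoped ENNReal Classical BigOperators
open Filter

noncomputable section

namespace RW

variable {G : Type*}

/-- One-step transition operator `Pφ(x) = Σ_y p(x,y) φ(y)`. -/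
def kapp (p : G → G → ℝ≥0∞) (φ : G → ℝ≥0∞) (x : G) : ℝ≥0∞ := ∑' y, p x y * φ y

/-- n-step transition kernel. -/
def kiter (p : G → G → ℝ≥0∞) : ℕ → G → G → ℝ≥0∞
  | 0 => fun x y => if x = y then 1 else 0
  | n + 1 => fun x y => ∑' z, p x z * kiter p n z y

/-- Green function `G(x,y) = Σ_t ℙ_x(X(t)=y)`. -/
def green (p : G → G → ℝ≥0∞) (x y : G) : ℝ≥0∞ := ∑' n, kiter p n x y

/-- Green operator `Gφ(x) = Σ_y G(x,y) φ(y)`. -/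
def greenApp (p : G → G → ℝ≥0∞) (φ : G → ℝ≥0∞) (x : G) : ℝ≥0∞ := ∑' y, green p x y * φ y

/-- Probability of first hitting `y` at time `n ≥ 1`. -/
def fhit (p : G → G → ℝ≥0∞) : ℕ → G → G → ℝ≥0∞
  | 0 => fun _ _ => 0
  | 1 => p
  | n + 2 => fun x y => ∑' z, if z = y then 0 else p x z * fhit p (n + 1) z y

/-- Hitting probability `Q(x,y) = ℙ_x(∃ t ≥ 1, X(t) = y)`. -/
def hitProb (p : G → G → ℝ≥0∞) (x y : G) : ℝ≥0∞ := ∑' n, fhit p n x y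

/-- Survival probability `ℙ_x(τ_ϑ > n)`. -/
def surv (p : G → G → ℝ≥0∞) (n : ℕ) (x : G) : ℝ≥0∞ := ∑' y, kiter p n x y

/-- Expected lifetime `𝔼_x(τ_ϑ) = Σ_n ℙ_x(τ_ϑ > n)`. -/
def gexp (p : G → G → ℝ≥0∞) (x : G) : ℝ≥0∞ := ∑' n, surv p n x

variable [Group G]

/-- Matrix coefficients `a_u(x,y)` of the operator `A_u = T_u P - P T_u`. -/
def acoef (p : G → G → ℝ≥0∞) (E : Set G) (u x y : G) : ℝ≥0∞ :=
  if y * u⁻¹ ∈ E then p (x * u) y - p x (y * u⁻¹) else p (x * u) y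

/-- The operator `A_u φ(x) = Σ_y a_u(x,y) φ(y)`. -/
def Aop (p : G → G → ℝ≥0∞) (E : Set G) (u : G) (φ : G → ℝ≥0∞) (x : G) : ℝ≥0∞ :=
  ∑' y, acoef p E u x y * φ y

/-- Ladder height transition kernel `p_H(x,y) = G A_x 𝟙_{y}(e)`. -/
def ladder (p : G → G → ℝ≥0∞) (E : Set G) (x y : G) : ℝ≥0∞ :=
  ∑' z, green p 1 z * acoef p E x z y

/-- The renewal function `V(x) = 𝔼_x(𝒯_ϑ)` of the ladder height process. -/
def V (p : G → G → ℝ≥0∞) (E : Set G) (x : G) : ℝ≥0∞ :=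
  ∑' n, surv (ladder p E) n x

end RW

end

open RW

/-!
Let `s_N = ℙ_·(τ_ϑ > N)` and `g = 𝔼_·(τ_ϑ) = Σ_N s_N`. Since `A_u = T_u P - P T_u` and the Green
kernel satisfies `G = I + GP`, the quantity `B_N(u) = Σ_z G(e,z) s_N(zu)` satisfies
`P_H s_N(u) + B_N(u) = s_N(u) + B_{N+1}(u)` for `u ∈ E`. Summing over `N` telescopes to
`P_H g + g(e) = g` on `E`. As `B_N` decreases in `N`, the same identity shows that each `s_N`
is `P_H`-superharmonic. Iterating `g = g(e) + P_H g` gives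
`g = g(e) Σ_{n<N} P_H^n 𝟙 + P_H^N g`, and `P_H^N g → 0` by dominated convergence, because
`P_H^N s_n ≤ min (s_n, ℙ_·(𝒯_ϑ > N))`. In the limit, `g = g(e) V`.
-/

open Topology MeasureTheory

theorem ENNReal.tendsto_tsum_of_dominated_convergence {β : Type*} {F : ℕ → β → ℝ≥0∞}
    {f bound : β → ℝ≥0∞} (h_bound : ∀ N b, F N b ≤ bound b) (h_fin : ∑' b, bound b ≠ ⊤)
    (h_lim : ∀ b, Tendsto (fun N => F N b) atTop (𝓝 (f b))) :
    Tendsto (fun N => ∑' b, F N b) atTop (𝓝 (∑' b, f b)) := by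
  let : MeasurableSpace β := ⊤
  have : MeasurableSingletonClass β := ⟨fun _ => trivial⟩
  simp only [← lintegral_count]
  exact tendsto_lintegral_of_dominated_convergence bound (fun _ => measurable_from_top)
    (fun N => ae_of_all _ (h_bound N)) (by rwa [lintegral_count]) (ae_of_all _ h_lim)

theorem ENNReal.tsum_add_eq_tsum_of_add_eq_add_succ {a b c : ℕ → ℝ≥0∞}
    (h : ∀ n, a n + b n = c n + b (n + 1)) (hb : ∀ n, b n ≤ ∑' k, c (k + n)) :
    ∑' n, a n + b 0 = ∑' n, c n := by
  have htel : ∀ K, ∑ n ∈ Finset.range K, a n + b 0 = ∑ n ∈ Finset.range K, c n + b K := by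
    intro K
    induction K with
    | zero => simp
    | succ K ih =>
      rw [Finset.sum_range_succ, Finset.sum_range_succ, add_right_comm, ih, add_assoc,
        add_comm (b K), h, add_assoc]
  refine le_antisymm ?_ (ENNReal.tsum_le_of_sum_range_le fun K => ?_)
  · rw [ENNReal.tsum_eq_iSup_nat, ENNReal.iSup_add]
    refine iSup_le fun K => ?_
    rw [htel, ← ENNReal.summable.sum_add_tsum_nat_add' (k := K)]
    gcongr
    exact hb K
  · calc ∑ n ∈ Finset.range K, c n ≤ ∑ n ∈ Finset.range K, c n + b K := le_self_add
      _ = ∑ n ∈ Finset.range K, a n + b 0 := (htel K).symm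
      _ ≤ ∑' n, a n + b 0 := by gcongr; exact ENNReal.sum_le_tsum _

namespace RW

section Kernel

variable {α : Type*} (q : α → α → ℝ≥0∞)

theorem kapp_mono : Monotone (kapp q) := fun _ _ h _ =>
  ENNReal.tsum_le_tsum fun y => by gcongr; exact h y

theorem kapp_add (φ ψ : α → ℝ≥0∞) (x : α) :
    kapp q (fun y => φ y + ψ y) x = kapp q φ x + kapp q ψ x := by
  simp only [kapp, mul_add, ENNReal.tsum_add]

theorem kapp_const_mul (c : ℝ≥0∞) (φ : α → ℝ≥0∞) (x : α) :
    kapp q (fun y => c * φ y) x = c * kapp q φ x := by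
  simp only [kapp, mul_left_comm _ c, ENNReal.tsum_mul_left]

theorem kapp_finset_sum {ι : Type*} (s : Finset ι) (f : ι → α → ℝ≥0∞) (x : α) :
    kapp q (fun y => ∑ i ∈ s, f i y) x = ∑ i ∈ s, kapp q (f i) x := by
  simp only [kapp, Finset.mul_sum]
  exact Summable.tsum_finsetSum fun _ _ => ENNReal.summable

theorem kapp_tsum {ι : Type*} (f : ι → α → ℝ≥0∞) (x : α) :
    kapp q (fun y => ∑' i, f i y) x = ∑' i, kapp q (f i) x := by
  simp only [kapp, ← ENNReal.tsum_mul_left]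
  exact ENNReal.tsum_comm

theorem kapp_iterate_tsum {ι : Type*} (f : ι → α → ℝ≥0∞) :
    ∀ N x, (kapp q)^[N] (fun y => ∑' i, f i y) x = ∑' i, (kapp q)^[N] (f i) x
  | 0, _ => rfl
  | N + 1, x => by
    simp only [Function.iterate_succ_apply']
    rw [funext (kapp_iterate_tsum f N), kapp_tsum]

theorem tsum_kiter_mul (φ : α → ℝ≥0∞) :
    ∀ n x, ∑' y, kiter q n x y * φ y = (kapp q)^[n] φ x
  | 0, x => by simp [kiter]
  | n + 1, x => by
    simp only [kiter, Function.iterate_succ_apply', kapp, ← tsum_kiter_mul φ n,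
      ← ENNReal.tsum_mul_left, ← ENNReal.tsum_mul_right, mul_assoc]
    exact ENNReal.tsum_comm

theorem surv_eq_iterate (n : ℕ) : surv q n = (kapp q)^[n] fun _ => 1 := by
  funext x
  simpa [surv] using tsum_kiter_mul q (fun _ => 1) n x

theorem surv_zero (x : α) : surv q 0 x = 1 := by
  rw [surv_eq_iterate, Function.iterate_zero_apply]

theorem surv_succ (n : ℕ) (x : α) : surv q (n + 1) x = kapp q (surv q n) x := by
  rw [surv_eq_iterate, surv_eq_iterate, Function.iterate_succ_apply']

theorem surv_add (m n : ℕ) (x : α) : surv q (m + n) x = (kapp q)^[m] (surv q n) x := by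
  rw [surv_eq_iterate, surv_eq_iterate, Function.iterate_add_apply]

theorem tsum_green_mul (φ : α → ℝ≥0∞) (x : α) :
    ∑' y, green q x y * φ y = ∑' n, (kapp q)^[n] φ x := by
  simp only [green, ← ENNReal.tsum_mul_right, ← tsum_kiter_mul]
  exact ENNReal.tsum_comm

theorem tsum_green_mul_kapp_add (σ : α → ℝ≥0∞) (x : α) :
    ∑' y, green q x y * kapp q σ y + σ x = ∑' y, green q x y * σ y := by
  rw [tsum_green_mul, tsum_green_mul,
    tsum_eq_zero_add' ENNReal.summable (f := fun n => (kapp q)^[n] σ x)]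
  simp only [Function.iterate_succ_apply, Function.iterate_zero_apply]
  exact add_comm _ _

theorem gexp_eq_greenApp_one (x : α) : gexp q x = greenApp q (fun _ => 1) x := by
  simp only [greenApp, tsum_green_mul, gexp, surv_eq_iterate]

theorem kapp_gexp_add_one (x : α) : kapp q (gexp q) x + 1 = gexp q x := by
  rw [gexp, tsum_eq_zero_add' ENNReal.summable, surv_zero, add_comm]
  simp only [surv_succ]
  rw [← kapp_tsum]
  rfl

theorem one_le_gexp (x : α) : 1 ≤ gexp q x := by
  rw [← kapp_gexp_add_one]
  exact le_add_self

variable {q}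

theorem kapp_one_le (hsub : ∀ x, ∑' y, q x y ≤ 1) (x : α) : kapp q (fun _ => 1) x ≤ 1 := by
  simpa [kapp] using hsub x

theorem surv_le_one (hsub : ∀ x, ∑' y, q x y ≤ 1) : ∀ n x, surv q n x ≤ 1
  | 0, x => (surv_zero q x).le
  | n + 1, x => by
    rw [surv_succ]
    exact (kapp_mono q (surv_le_one hsub n) x).trans (kapp_one_le hsub x)

theorem surv_succ_le (hsub : ∀ x, ∑' y, q x y ≤ 1) (n : ℕ) (x : α) :
    surv q (n + 1) x ≤ surv q n x := by
  rw [surv_eq_iterate, surv_eq_iterate, Function.iterate_succ_apply]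
  exact (kapp_mono q).iterate n (kapp_one_le hsub) x

variable {S : Set α}

theorem kapp_le_kapp_of_le_on (hq : ∀ x y, q x y ≠ 0 → y ∈ S) {φ ψ : α → ℝ≥0∞}
    (h : ∀ y ∈ S, φ y ≤ ψ y) (x : α) : kapp q φ x ≤ kapp q ψ x :=
  ENNReal.tsum_le_tsum fun y => by
    by_cases hxy : q x y = 0
    · simp [hxy]
    · gcongr
      exact h y (hq x y hxy)

theorem kapp_congr_on (hq : ∀ x y, q x y ≠ 0 → y ∈ S) {φ ψ : α → ℝ≥0∞}
    (h : ∀ y ∈ S, φ y = ψ y) (x : α) : kapp q φ x = kapp q ψ x :=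
  le_antisymm (kapp_le_kapp_of_le_on hq (fun y hy => (h y hy).le) x)
    (kapp_le_kapp_of_le_on hq (fun y hy => (h y hy).ge) x)

theorem kapp_iterate_le_of_kapp_le (hq : ∀ x y, q x y ≠ 0 → y ∈ S) {φ : α → ℝ≥0∞}
    (hφ : ∀ x ∈ S, kapp q φ x ≤ φ x) : ∀ n, ∀ x ∈ S, (kapp q)^[n] φ x ≤ φ x
  | 0, _, _ => le_rfl
  | n + 1, x, hx => by
    rw [Function.iterate_succ_apply']
    exact (kapp_le_kapp_of_le_on hq (kapp_iterate_le_of_kapp_le hq hφ n) x).trans (hφ x hx)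

theorem kiter_eq_zero_of_notMem (hq : ∀ x y, q x y ≠ 0 → y ∈ S) {z : α} (hz : z ∉ S) :
    ∀ n, ∀ x ∈ S, kiter q n x z = 0
  | 0, x, hx => if_neg fun h : x = z => hz (h ▸ hx)
  | n + 1, x, _ => ENNReal.tsum_eq_zero.2 fun w => by
    by_cases hxw : q x w = 0
    · rw [hxw, zero_mul]
    · rw [kiter_eq_zero_of_notMem hq hz n w (hq x w hxw), mul_zero]

theorem green_eq_zero_of_notMem (hq : ∀ x y, q x y ≠ 0 → y ∈ S) {x z : α} (hx : x ∈ S)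
    (hz : z ∉ S) : green q x z = 0 :=
  ENNReal.tsum_eq_zero.2 fun n => kiter_eq_zero_of_notMem hq hz n x hx

theorem eq_sum_mul_surv_add_kapp_iterate (hq : ∀ x y, q x y ≠ 0 → y ∈ S) {h : α → ℝ≥0∞}
    {c : ℝ≥0∞} (hh : ∀ x ∈ S, h x = c + kapp q h x) :
    ∀ N, ∀ x ∈ S, h x = ∑ n ∈ Finset.range N, c * surv q n x + (kapp q)^[N] h x
  | 0, _, _ => by simp
  | N + 1, x, hx => by
    rw [hh x hx, kapp_congr_on hq (eq_sum_mul_surv_add_kapp_iterate hq hh N) x, kapp_add,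
      kapp_finset_sum, Finset.sum_range_succ', surv_zero, mul_one, Function.iterate_succ_apply']
    simp only [kapp_const_mul, ← surv_succ]
    ring

theorem mul_gexp_le (hq : ∀ x y, q x y ≠ 0 → y ∈ S) {h : α → ℝ≥0∞} {c : ℝ≥0∞}
    (hh : ∀ x ∈ S, h x = c + kapp q h x) {x : α} (hx : x ∈ S) : c * gexp q x ≤ h x := by
  rw [gexp, ← ENNReal.tsum_mul_left]
  exact ENNReal.tsum_le_of_sum_range_le fun N =>
    le_self_add.trans (eq_sum_mul_surv_add_kapp_iterate hq hh N x hx).ge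

theorem eq_mul_gexp_of_tendsto (hq : ∀ x y, q x y ≠ 0 → y ∈ S) {h : α → ℝ≥0∞} {c : ℝ≥0∞}
    (hh : ∀ x ∈ S, h x = c + kapp q h x) {x : α} (hx : x ∈ S)
    (hlim : Tendsto (fun N => (kapp q)^[N] h x) atTop (𝓝 0)) : h x = c * gexp q x := by
  have hsum := (ENNReal.tendsto_nat_tsum fun n => c * surv q n x).add hlim
  rw [add_zero, ENNReal.tsum_mul_left] at hsum
  refine tendsto_nhds_unique ?_ hsum
  simp only [← eq_sum_mul_surv_add_kapp_iterate hq hh _ x hx, tendsto_const_nhds]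

theorem tendsto_kapp_iterate_tsum_zero (hq : ∀ x y, q x y ≠ 0 → y ∈ S) {f : ℕ → α → ℝ≥0∞}
    (hf : ∀ n y, f n y ≤ 1) (hsuper : ∀ n, ∀ y ∈ S, kapp q (f n) y ≤ f n y) {x : α}
    (hx : x ∈ S) (hfin : ∑' n, f n x ≠ ⊤) (hgexp : gexp q x ≠ ⊤) :
    Tendsto (fun N => (kapp q)^[N] (fun y => ∑' n, f n y) x) atTop (𝓝 0) := by
  have hsurv : Tendsto (fun N => surv q N x) atTop (𝓝 0) :=
    ENNReal.tendsto_atTop_zero_of_tsum_ne_top hgexp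
  have hle : ∀ n N, (kapp q)^[N] (f n) x ≤ surv q N x := fun n N => by
    rw [surv_eq_iterate]
    exact (kapp_mono q).iterate N (hf n) x
  simp only [kapp_iterate_tsum]
  simpa using ENNReal.tendsto_tsum_of_dominated_convergence (f := fun _ => 0)
    (fun N n => kapp_iterate_le_of_kapp_le hq (hsuper n) N x hx) hfin
    fun n => tendsto_of_tendsto_of_tendsto_of_le_of_le tendsto_const_nhds hsurv
      (fun _ => bot_le) (hle n)

end Kernel

section Group

variable {G : Type*} [Group G] {p : G → G → ℝ≥0∞} {E : Set G}

theorem kapp_mul_right_le (hsupp : ∀ x y, p x y ≠ 0 → x ∈ E ∧ y ∈ E)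
    (hmono : ∀ x ∈ E, ∀ y ∈ E, ∀ u ∈ E, p x y ≤ p (x * u) (y * u)) {u x : G} (hu : u ∈ E)
    (hx : x ∈ E) (φ : G → ℝ≥0∞) : kapp p (fun z => φ (z * u)) x ≤ kapp p φ (x * u) :=
  calc ∑' z, p x z * φ (z * u) ≤ ∑' z, p (x * u) (z * u) * φ (z * u) :=
        ENNReal.tsum_le_tsum fun z => by
          by_cases hxz : p x z = 0
          · simp [hxz]
          · gcongr
            exact hmono x hx z (hsupp x z hxz).2 u hu
    _ = ∑' w, p (x * u) w * φ w := (Equiv.mulRight u).tsum_eq fun w => p (x * u) w * φ w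

theorem kapp_iterate_mul_right_le (hsupp : ∀ x y, p x y ≠ 0 → x ∈ E ∧ y ∈ E)
    (hmono : ∀ x ∈ E, ∀ y ∈ E, ∀ u ∈ E, p x y ≤ p (x * u) (y * u)) {u : G} (hu : u ∈ E)
    (φ : G → ℝ≥0∞) : ∀ n, ∀ x ∈ E, (kapp p)^[n] (fun z => φ (z * u)) x ≤ (kapp p)^[n] φ (x * u)
  | 0, _, _ => le_rfl
  | n + 1, x, hx => by
    simp only [Function.iterate_succ_apply']
    exact (kapp_le_kapp_of_le_on (fun a b h => (hsupp a b h).2)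
      (kapp_iterate_mul_right_le hsupp hmono hu φ n) x).trans
      (kapp_mul_right_le hsupp hmono hu hx _)

theorem acoef_add_eq (hsupp : ∀ x y, p x y ≠ 0 → x ∈ E ∧ y ∈ E)
    (hmono : ∀ x ∈ E, ∀ y ∈ E, ∀ u ∈ E, p x y ≤ p (x * u) (y * u)) {u z : G} (hu : u ∈ E)
    (hz : z ∈ E) (y : G) : acoef p E u z y + p z (y * u⁻¹) = p (z * u) y := by
  unfold acoef
  split_ifs with hy
  · simpa using tsub_add_cancel_of_le (hmono z hz (y * u⁻¹) hy u hu)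
  · rw [not_imp_comm.1 (fun h => (hsupp z _ h).2) hy, add_zero]

theorem Aop_add_kapp_mul_right (hsupp : ∀ x y, p x y ≠ 0 → x ∈ E ∧ y ∈ E)
    (hmono : ∀ x ∈ E, ∀ y ∈ E, ∀ u ∈ E, p x y ≤ p (x * u) (y * u)) {u z : G} (hu : u ∈ E)
    (hz : z ∈ E) (φ : G → ℝ≥0∞) :
    Aop p E u φ z + kapp p (fun w => φ (w * u)) z = kapp p φ (z * u) := by
  have hshift : kapp p (fun w => φ (w * u)) z = ∑' y, p z (y * u⁻¹) * φ y := by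
    rw [kapp, ← (Equiv.mulRight u⁻¹).tsum_eq]
    simp
  rw [hshift, Aop, ← ENNReal.tsum_add, kapp]
  simp only [← add_mul, acoef_add_eq hsupp hmono hu hz]

theorem kapp_ladder (φ : G → ℝ≥0∞) (u : G) :
    kapp (ladder p E) φ u = ∑' z, green p 1 z * Aop p E u φ z := by
  simp only [kapp, ladder, Aop, ← ENNReal.tsum_mul_right, ← ENNReal.tsum_mul_left, mul_assoc]
  exact ENNReal.tsum_comm

theorem mem_of_ladder_ne_zero (hsupp : ∀ x y, p x y ≠ 0 → x ∈ E ∧ y ∈ E) {x y : G}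
    (h : ladder p E x y ≠ 0) : y ∈ E := by
  by_contra hy
  have hp : ∀ w, p w y = 0 := fun w => not_imp_comm.1 (fun h => (hsupp w y h).2) hy
  refine h (ENNReal.tsum_eq_zero.2 fun z => ?_)
  simp [acoef, hp]

theorem kapp_ladder_add_tsum_green (hsupp : ∀ x y, p x y ≠ 0 → x ∈ E ∧ y ∈ E)
    (hmono : ∀ x ∈ E, ∀ y ∈ E, ∀ u ∈ E, p x y ≤ p (x * u) (y * u)) (hone : (1 : G) ∈ E)
    {u : G} (hu : u ∈ E) (φ : G → ℝ≥0∞) :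
    kapp (ladder p E) φ u + ∑' z, green p 1 z * φ (z * u)
      = φ u + ∑' z, green p 1 z * kapp p φ (z * u) := by
  have hgreen := tsum_green_mul_kapp_add p (fun z => φ (z * u)) 1
  rw [one_mul] at hgreen
  rw [← hgreen, kapp_ladder, ← add_assoc, ← ENNReal.tsum_add, add_comm (φ u)]
  congr 1
  refine tsum_congr fun z => ?_
  rw [← mul_add]
  by_cases hz : z ∈ E
  · rw [Aop_add_kapp_mul_right hsupp hmono hu hz]
  · rw [green_eq_zero_of_notMem (fun a b h => (hsupp a b h).2) hone hz, zero_mul, zero_mul]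

theorem tsum_green_mul_surv_le (hsupp : ∀ x y, p x y ≠ 0 → x ∈ E ∧ y ∈ E)
    (hmono : ∀ x ∈ E, ∀ y ∈ E, ∀ u ∈ E, p x y ≤ p (x * u) (y * u)) (hone : (1 : G) ∈ E)
    {u : G} (hu : u ∈ E) (N : ℕ) :
    ∑' z, green p 1 z * surv p N (z * u) ≤ ∑' k, surv p (k + N) u := by
  rw [tsum_green_mul]
  refine ENNReal.tsum_le_tsum fun k => ?_
  simpa [surv_add] using kapp_iterate_mul_right_le hsupp hmono hu (surv p N) k 1 hone

theorem kapp_ladder_gexp_add (hsupp : ∀ x y, p x y ≠ 0 → x ∈ E ∧ y ∈ E)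
    (hmono : ∀ x ∈ E, ∀ y ∈ E, ∀ u ∈ E, p x y ≤ p (x * u) (y * u)) (hone : (1 : G) ∈ E)
    {u : G} (hu : u ∈ E) : kapp (ladder p E) (gexp p) u + gexp p 1 = gexp p u := by
  have hB0 : ∑' z, green p 1 z * surv p 0 (z * u) = gexp p 1 := by
    simp only [surv_zero, gexp_eq_greenApp_one, greenApp]
  rw [← hB0]
  show kapp (ladder p E) (fun y => ∑' n, surv p n y) u + _ = ∑' n, surv p n u
  rw [kapp_tsum]
  refine ENNReal.tsum_add_eq_tsum_of_add_eq_add_succ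
    (b := fun N => ∑' z, green p 1 z * surv p N (z * u)) (c := fun N => surv p N u)
    (fun N => ?_) (tsum_green_mul_surv_le hsupp hmono hone hu)
  simpa only [surv_succ] using kapp_ladder_add_tsum_green hsupp hmono hone hu (surv p N)

theorem kapp_ladder_surv_le (hsupp : ∀ x y, p x y ≠ 0 → x ∈ E ∧ y ∈ E)
    (hsub : ∀ x, ∑' y, p x y ≤ 1)
    (hmono : ∀ x ∈ E, ∀ y ∈ E, ∀ u ∈ E, p x y ≤ p (x * u) (y * u)) (hone : (1 : G) ∈ E)
    (hfin : gexp p 1 ≠ ⊤) {u : G} (hu : u ∈ E) (N : ℕ) :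
    kapp (ladder p E) (surv p N) u ≤ surv p N u := by
  have hstep := kapp_ladder_add_tsum_green hsupp hmono hone hu (surv p N)
  simp only [← surv_succ] at hstep
  have hB : ∑' z, green p 1 z * surv p N (z * u) ≠ ⊤ := by
    refine ne_top_of_le_ne_top hfin ?_
    rw [gexp_eq_greenApp_one]
    exact ENNReal.tsum_le_tsum fun z => by gcongr; exact surv_le_one hsub N _
  have hanti : ∑' z, green p 1 z * surv p (N + 1) (z * u)
      ≤ ∑' z, green p 1 z * surv p N (z * u) :=
    ENNReal.tsum_le_tsum fun z => by gcongr; exact surv_succ_le hsub N _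
  rw [← ENNReal.add_le_add_iff_right hB, hstep]
  gcongr

end Group

end RW

theorem statement14_general {G : Type*} [Group G]
    (p : G → G → ℝ≥0∞) (E : Set G)
    (hsupp : ∀ x y, p x y ≠ 0 → x ∈ E ∧ y ∈ E)
    (hsub : ∀ x, (∑' y, p x y) ≤ 1)
    (hone : (1 : G) ∈ E)
    (hmono : ∀ x ∈ E, ∀ y ∈ E, ∀ u ∈ E, p x y ≤ p (x * u) (y * u))
    (hfin : ∀ x ∈ E, gexp p x < ⊤) :
    (∀ x ∈ E, gexp p x = greenApp p (fun _ => 1) x) ∧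
    (∀ x ∈ E, kapp p (gexp p) x + 1 = gexp p x) ∧
    (∀ u ∈ E, gexp p 1 + kapp (ladder p E) (gexp p) u ≤ gexp p u) ∧
    (∀ x ∈ E, V p E x = gexp p x / gexp p 1) := by
  have hladder : ∀ u ∈ E, gexp p u = gexp p 1 + kapp (ladder p E) (gexp p) u := fun u hu => by
    rw [add_comm, kapp_ladder_gexp_add hsupp hmono hone hu]
  refine ⟨fun x _ => gexp_eq_greenApp_one p x, fun x _ => kapp_gexp_add_one p x,
    fun u hu => (hladder u hu).ge, fun x hx => ?_⟩
  have hq : ∀ a b, ladder p E a b ≠ 0 → b ∈ E := fun a b => mem_of_ladder_ne_zero hsupp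
  have hfin1 : gexp p 1 ≠ ⊤ := (hfin 1 hone).ne
  have hV : gexp (ladder p E) x ≠ ⊤ := ne_top_of_le_ne_top (hfin x hx).ne <|
    le_mul_of_one_le_left' (one_le_gexp p 1) |>.trans (mul_gexp_le hq hladder hx)
  have hlim := tendsto_kapp_iterate_tsum_zero hq (surv_le_one hsub)
    (fun N u hu => kapp_ladder_surv_le hsupp hsub hmono hone hfin1 hu N) hx (hfin x hx).ne hV
  -- `V p E` unfolds to `gexp (ladder p E)`
  rw [ENNReal.eq_div_iff (zero_lt_one.trans_le (one_le_gexp p 1)).ne' hfin1]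
  exact (eq_mul_gexp_of_tendsto hq hladder hx hlim).symm

theorem statement14 {G : Type*} [Group G] [Countable G]
    (p : G → G → ℝ≥0∞) (E : Set G)
    (hsupp : ∀ x y, p x y ≠ 0 → x ∈ E ∧ y ∈ E)
    (hsub : ∀ x, (∑' y, p x y) ≤ 1)
    (hirr : ∀ x ∈ E, ∀ y ∈ E, 0 < hitProb p x y)
    (htrans : ∀ x ∈ E, green p x x < ⊤)
    (hone : (1 : G) ∈ E)
    (hmul : ∀ x ∈ E, ∀ y ∈ E, x * y ∈ E)
    (hmono : ∀ x ∈ E, ∀ y ∈ E, ∀ u ∈ E, p x y ≤ p (x * u) (y * u))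
    (hfin : ∀ x ∈ E, gexp p x < ⊤) :
    (∀ x ∈ E, gexp p x = greenApp p (fun _ => 1) x) ∧
    (∀ x ∈ E, kapp p (gexp p) x + 1 = gexp p x) ∧
    (∀ u ∈ E, gexp p 1 + kapp (ladder p E) (gexp p) u ≤ gexp p u) ∧
    (∀ x ∈ E, V p E x = gexp p x / gexp p 1) :=
  statement14_general p E hsupp hsub hone hmono hfin
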